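/- If f : S^1 → ℝ^{2k+1} is odd (f(−x) = −f(x), where −x is the antipode) and continuous, then there is a finite subset X ⊆ S^1 of geodesic diameter at most 2πk/(2k+1) such that the convex hull of f(X) contains the origin. -/

import Mathlib

noncomputable def SM (k : ℕ) (t : ℝ) : EuclideanSpace ℝ (Fin (2 * k)) :=
  WithLp.toLp 2 (fun i => if i.val % 2 = 0 then Real.cos ((2 * ((i.val / 2 : ℕ) : ℝ) + 1) * t)
           else Real.sin ((2 * ((i.val / 2 : ℕ) : ℝ) + 1) * t))

/-- Geodesic distance on the circle ℝ/2πℤ (total circumference 2π). -/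
noncomputable def cdist (s t : ℝ) : ℝ := ‖((s - t : ℝ) : AddCircle (2 * Real.pi))‖

/-- `inArcPi a x` : the point `x` lies in the open counterclockwise arc `(a + π, a)` on ℝ/2πℤ. -/
def inArcPi (a x : ℝ) : Prop :=
  ∃ s : ℝ, 0 < s ∧ s < Real.pi ∧ ∃ m : ℤ, x = a + Real.pi + s + 2 * Real.pi * m

private lemma norm_addCircle_le (p : ℝ) (x : ℝ) (m : ℤ) :
    ‖((x : ℝ) : AddCircle p)‖ ≤ |x - p * m| := by
  have h : ((x - p * m : ℝ) : AddCircle p) = ((x : ℝ) : AddCircle p) := by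
    have h0 : ((p * m : ℝ) : AddCircle p) = 0 := by
      have h1 : (p * m : ℝ) = (m : ℤ) • p := by rw [zsmul_eq_mul]; ring
      rw [h1, AddCircle.coe_zsmul, AddCircle.coe_period, smul_zero]
    have h2 : ((x - p * m : ℝ) : AddCircle p) =
        ((x : ℝ) : AddCircle p) - ((p * m : ℝ) : AddCircle p) := AddCircle.coe_sub _ _ _
    rw [h2, h0, sub_zero]
  rw [← h]
  simpa [Real.norm_eq_abs] using QuotientAddGroup.norm_mk_le_norm (S := AddSubgroup.zmultiples p) (m := x - p * m)

private lemma cdist_le_abs (s t : ℝ) (m : ℤ) : cdist s t ≤ |s - t - 2 * Real.pi * m| :=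
  norm_addCircle_le _ _ m

/-- the vertices of the regular (2k+1)-gon starting at `t` -/
private noncomputable def pgon (k : ℕ) (t : ℝ) (j : Fin (2 * k + 1)) : ℝ :=
  t + 2 * Real.pi * (j : ℕ) / (2 * (k : ℝ) + 1)

private noncomputable def pmat (k : ℕ) (f : ℝ → EuclideanSpace ℝ (Fin (2 * k + 1))) (t : ℝ) :
    Matrix (Fin (2 * k + 1)) (Fin (2 * k + 1)) ℝ :=
  Matrix.of fun i j => f (pgon k t j) i

private noncomputable def pdet (k : ℕ) (f : ℝ → EuclideanSpace ℝ (Fin (2 * k + 1))) (t : ℝ) : ℝ :=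
  (pmat k f t).det

section helpers

variable {k : ℕ} {f : ℝ → EuclideanSpace ℝ (Fin (2 * k + 1))}

private lemma pdet_cont (hc : Continuous f) : Continuous (pdet k f) := by
  apply Continuous.matrix_det
  apply continuous_matrix
  intro i j
  exact (continuous_apply i).comp ((PiLp.continuous_ofLp 2 _).comp (hc.comp (continuous_add_right _)))

private lemma pdet_rot (hper : ∀ t, f (t + 2 * Real.pi) = f t) (t : ℝ) :
    pdet k f (t + 2 * Real.pi / (2 * (k : ℝ) + 1)) = pdet k f t := by
  have hk0 : (0:ℝ) < 2 * (k:ℝ) + 1 := by positivity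
  have hMrot : pmat k f (t + 2 * Real.pi / (2 * (k : ℝ) + 1)) =
      (pmat k f t).submatrix id (finRotate (2 * k + 1)) := by
    ext i j
    simp only [pmat, Matrix.of_apply, Matrix.submatrix_apply, id_eq]
    rw [finRotate_succ_apply]
    by_cases hj : (j : ℕ) = 2 * k
    · have hlast : j = Fin.last (2 * k) := Fin.ext (by simpa using hj)
      have hval : ((j + 1 : Fin (2 * k + 1)) : ℕ) = 0 := by
        rw [hlast]; simp
      have h1 : pgon k (t + 2 * Real.pi / (2 * (k : ℝ) + 1)) j = t + 2 * Real.pi := by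
        simp only [pgon, hj]
        push_cast
        field_simp
        ring
      have h2 : pgon k t (j + 1) = t := by simp [pgon, hval]
      rw [h1, h2, hper]
    · have hjlt : (j : ℕ) < 2 * k := lt_of_le_of_ne (Nat.lt_succ_iff.mp j.isLt) hj
      have hval : ((j + 1 : Fin (2 * k + 1)) : ℕ) = (j : ℕ) + 1 := by
        rw [Fin.val_add_one]
        have : j ≠ Fin.last (2 * k) := by
          intro h; exact hj (by rw [h]; simp)
        simp [this]
      have h1 : pgon k (t + 2 * Real.pi / (2 * (k : ℝ) + 1)) j = pgon k t (j + 1) := by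
        simp only [pgon, hval]
        push_cast
        field_simp
        ring
      rw [h1]
  rw [pdet, pdet, hMrot, Matrix.det_permute', sign_finRotate]
  simp [Even.neg_one_pow (even_two_mul k)]

private lemma pdet_anti (hodd : ∀ t, f (t + Real.pi) = -f t) (t : ℝ) :
    pdet k f (t + Real.pi) = -pdet k f t := by
  have hM : pmat k f (t + Real.pi) = -pmat k f t := by
    ext i j
    simp only [pmat, Matrix.of_apply, Matrix.neg_apply]
    have h1 : pgon k (t + Real.pi) j = pgon k t j + Real.pi := by
      simp only [pgon]; ring
    rw [h1, hodd]
    rfl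
  rw [pdet, pdet, hM, Matrix.det_neg]
  have : Fintype.card (Fin (2 * k + 1)) = 2 * k + 1 := Fintype.card_fin _
  rw [this, Odd.neg_one_pow ⟨k, by ring⟩]
  ring

end helpers

theorem borsuk_ulam_circle (k : ℕ) (f : ℝ → EuclideanSpace ℝ (Fin (2 * k + 1)))
    (hc : Continuous f) (hodd : ∀ t, f (t + Real.pi) = -f t) :
    ∃ X : Finset ℝ, (∀ x ∈ X, ∀ y ∈ X, cdist x y ≤ 2 * Real.pi * k / (2 * k + 1)) ∧
      (0 : EuclideanSpace ℝ (Fin (2 * k + 1))) ∈ convexHull ℝ (f '' ↑X) := by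
  have hπ : (0:ℝ) < Real.pi := Real.pi_pos
  have hk0 : (0:ℝ) < 2 * (k:ℝ) + 1 := by positivity
  have hper : ∀ t, f (t + 2 * Real.pi) = f t := by
    intro t
    have h1 := hodd (t + Real.pi)
    have e : t + Real.pi + Real.pi = t + 2 * Real.pi := by ring
    rw [e, hodd t, neg_neg] at h1
    exact h1
  -- key sign flip : pdet (t + π/(2k+1)) = - pdet t
  have hkey : ∀ t : ℝ, pdet k f (t + Real.pi / (2 * (k:ℝ) + 1)) = -pdet k f t := by
    intro t
    have hiter : ∀ m : ℕ, pdet k f (t + Real.pi / (2 * (k:ℝ) + 1) + 2 * Real.pi * m / (2 * (k:ℝ) + 1))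
        = pdet k f (t + Real.pi / (2 * (k:ℝ) + 1)) := by
      intro m
      induction m with
      | zero => norm_num
      | succ m ih =>
        have e : t + Real.pi / (2 * (k:ℝ) + 1) + 2 * Real.pi * (m + 1 : ℕ) / (2 * (k:ℝ) + 1)
            = (t + Real.pi / (2 * (k:ℝ) + 1) + 2 * Real.pi * m / (2 * (k:ℝ) + 1))
              + 2 * Real.pi / (2 * (k:ℝ) + 1) := by
          push_cast; ring
        rw [e, pdet_rot hper, ih]
    have h1 := hiter k
    have e : t + Real.pi / (2 * (k:ℝ) + 1) + 2 * Real.pi * k / (2 * (k:ℝ) + 1) = t + Real.pi := by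
      field_simp; ring
    rw [e] at h1
    rw [← h1, pdet_anti hodd]
  -- IVT gives a zero of pdet
  obtain ⟨t₀, ht₀⟩ : ∃ t₀, pdet k f t₀ = 0 := by
    have h0 : (0:ℝ) ∈ Set.uIcc (pdet k f 0) (pdet k f (0 + Real.pi / (2 * (k:ℝ) + 1))) := by
      rw [hkey 0, Set.mem_uIcc]
      rcases le_total (pdet k f 0) 0 with h | h
      · exact Or.inl ⟨h, by linarith⟩
      · exact Or.inr ⟨by linarith, h⟩
    have := intermediate_value_uIcc (a := (0:ℝ)) (b := 0 + Real.pi / (2 * (k:ℝ) + 1))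
      ((pdet_cont hc).continuousOn)
    obtain ⟨t₀, _, ht₀⟩ := this h0
    exact ⟨t₀, ht₀⟩
  -- linear dependence of the columns
  obtain ⟨c, hc0, hcv⟩ : ∃ v, v ≠ 0 ∧ (pmat k f t₀).mulVec v = 0 :=
    Matrix.exists_mulVec_eq_zero_iff.mpr ht₀
  classical
  -- flipped points with nonnegative weights
  set Y : Fin (2 * k + 1) → ℝ := fun j => pgon k t₀ j + (if c j < 0 then Real.pi else 0) with hY
  set w : Fin (2 * k + 1) → ℝ := fun j => |c j| with hw
  have hterm : ∀ j, w j • f (Y j) = c j • f (pgon k t₀ j) := by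
    intro j
    by_cases hj : c j < 0
    · simp only [hY, hw, if_pos hj, abs_of_neg hj]
      rw [hodd, smul_neg, neg_smul, neg_neg]
    · simp only [hY, hw, if_neg hj, add_zero, abs_of_nonneg (not_lt.1 hj)]
  have hsumc : ∑ j, w j • f (Y j) = 0 := by
    have h1 : ∑ j, w j • f (Y j) = ∑ j, c j • f (pgon k t₀ j) := by
      exact Finset.sum_congr rfl fun j _ => hterm j
    rw [h1]
    ext i
    have h := congrFun hcv i
    simp only [Matrix.mulVec, dotProduct, pmat, Matrix.of_apply, Pi.zero_apply] at h
    rw [WithLp.ofLp_sum, Finset.sum_apply]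
    simp only [PiLp.smul_apply, smul_eq_mul, PiLp.zero_apply]
    rw [← h]
    exact Finset.sum_congr rfl fun j _ => mul_comm _ _
  set X : Finset ℝ := Finset.image Y Finset.univ with hX
  refine ⟨X, ?_, ?_⟩
  · -- diameter bound
    intro u hu v hv
    obtain ⟨j, -, rfl⟩ := Finset.mem_image.1 hu
    obtain ⟨j', -, rfl⟩ := Finset.mem_image.1 hv
    -- key general bound
    have key : ∀ (Q m : ℤ), |Q| ≤ 2 * (k:ℤ) →
        Y j - Y j' - 2 * Real.pi * m = Real.pi * Q / (2 * (k:ℝ) + 1) →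
        cdist (Y j) (Y j') ≤ 2 * Real.pi * k / (2 * k + 1) := by
      intro Q m hQ heq
      have h1 : cdist (Y j) (Y j') ≤ |Y j - Y j' - 2 * Real.pi * m| := cdist_le_abs _ _ m
      rw [heq] at h1
      have h2 : |Real.pi * Q / (2 * (k:ℝ) + 1)| = Real.pi * |(Q:ℝ)| / (2 * (k:ℝ) + 1) := by
        rw [abs_div, abs_mul, abs_of_pos hπ, abs_of_pos hk0]
      have h3 : |(Q:ℝ)| ≤ 2 * (k:ℝ) := by
        rw [← Int.cast_abs]
        exact_mod_cast hQ
      have h4 : Real.pi * |(Q:ℝ)| / (2 * (k:ℝ) + 1) ≤ Real.pi * (2 * (k:ℝ)) / (2 * (k:ℝ) + 1) := by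
        gcongr
      have h5 : Real.pi * (2 * (k:ℝ)) / (2 * (k:ℝ) + 1) = 2 * Real.pi * k / (2 * k + 1) := by
        ring
      linarith [h1, h2.le, h2.ge, h4]
    have hvj : (j:ℕ) < 2 * k + 1 := j.isLt
    have hvj' : (j':ℕ) < 2 * k + 1 := j'.isLt
    have key2 : ∀ d : ℤ, (d = 1 ∨ d = 0 ∨ d = -1) →
        (d ≠ 0 → ((j:ℕ):ℤ) ≠ ((j':ℕ):ℤ)) →
        Y j - Y j' = 2 * Real.pi * (j:ℕ) / (2*(k:ℝ)+1) - 2 * Real.pi * (j':ℕ) / (2*(k:ℝ)+1)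
          + d * Real.pi →
        cdist (Y j) (Y j') ≤ 2 * Real.pi * k / (2 * k + 1) := by
      intro d hdval hdne hYeq
      have heqgen : ∀ m : ℤ, Y j - Y j' - 2*Real.pi*m
          = Real.pi * ((2*(((j:ℕ):ℤ) - ((j':ℕ):ℤ)) + d*(2*(k:ℤ)+1) - 2*(2*(k:ℤ)+1)*m : ℤ) : ℝ)
            / (2*(k:ℝ)+1) := by
        intro m
        rw [hYeq]
        push_cast
        field_simp
      have split3 : ∀ s : ℤ, s > 2*(k:ℤ) ∨ s < -(2*(k:ℤ)) ∨ (-(2*(k:ℤ)) ≤ s ∧ s ≤ 2*(k:ℤ)) :=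
        fun s => by omega
      rcases hdval with rfl | rfl | rfl
      · have hne := hdne (by norm_num)
        rcases split3 (2*(((j:ℕ):ℤ) - ((j':ℕ):ℤ)) + 1*(2*(k:ℤ)+1)) with hbig | hsmall | hmid
        · exact key _ 1 (by rw [abs_le]; omega) (heqgen 1)
        · exact key _ (-1) (by rw [abs_le]; omega) (heqgen (-1))
        · exact key _ 0 (by rw [abs_le]; omega) (heqgen 0)
      · rcases split3 (2*(((j:ℕ):ℤ) - ((j':ℕ):ℤ)) + 0*(2*(k:ℤ)+1)) with hbig | hsmall | hmid
        · exact key _ 1 (by rw [abs_le]; omega) (heqgen 1)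
        · exact key _ (-1) (by rw [abs_le]; omega) (heqgen (-1))
        · exact key _ 0 (by rw [abs_le]; omega) (heqgen 0)
      · have hne := hdne (by norm_num)
        rcases split3 (2*(((j:ℕ):ℤ) - ((j':ℕ):ℤ)) + (-1)*(2*(k:ℤ)+1)) with hbig | hsmall | hmid
        · exact key _ 1 (by rw [abs_le]; omega) (heqgen 1)
        · exact key _ (-1) (by rw [abs_le]; omega) (heqgen (-1))
        · exact key _ 0 (by rw [abs_le]; omega) (heqgen 0)
    have hneval : j ≠ j' → ((j:ℕ):ℤ) ≠ ((j':ℕ):ℤ) := by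
      intro h hval
      exact h (Fin.ext (by exact_mod_cast hval))
    by_cases h1 : c j < 0 <;> by_cases h2 : c j' < 0
    · refine key2 0 (by norm_num) (fun h => absurd rfl h) ?_
      simp only [hY, pgon, if_pos h1, if_pos h2]
      push_cast
      ring
    · refine key2 1 (by norm_num) (fun _ => hneval fun h => h2 (h ▸ h1)) ?_
      simp only [hY, pgon, if_pos h1, if_neg h2]
      push_cast
      ring
    · refine key2 (-1) (by norm_num) (fun _ => hneval fun h => h1 (h ▸ h2)) ?_
      simp only [hY, pgon, if_neg h1, if_pos h2]
      push_cast
      ring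
    · refine key2 0 (by norm_num) (fun h => absurd rfl h) ?_
      simp only [hY, pgon, if_neg h1, if_neg h2]
      push_cast
      ring
  · -- convex hull membership
    have hw0 : ∀ j ∈ Finset.univ, (0:ℝ) ≤ w j := fun j _ => abs_nonneg _
    have hwpos : (0:ℝ) < ∑ j, w j := by
      obtain ⟨j₀, hj₀⟩ : ∃ j, c j ≠ 0 := by
        by_contra h
        push_neg at h
        exact hc0 (funext h)
      calc (0:ℝ) < |c j₀| := abs_pos.mpr hj₀
        _ ≤ ∑ j, w j := Finset.single_le_sum hw0 (Finset.mem_univ j₀)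
    have hz : ∀ j ∈ Finset.univ, f (Y j) ∈ f '' (X : Set ℝ) :=
      fun j _ => Set.mem_image_of_mem f (by simp [hX])
    have hmem := Finset.centerMass_mem_convexHull Finset.univ hw0 hwpos hz
    rw [Finset.centerMass, hsumc, smul_zero] at hmem
    exact hmem
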